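/- Let q ∈ ℂ with |q| < 1. Then Ramanujan's third order mock theta function φ satisfies φ(q) := ∑_{n=0}^∞ q^{n²} / (−q²;q²)_n = 1 + ∑_{n=1}^∞ (−1)^{n−1} q^{2n−1} · (q;q²)_{n−1}. -/

import Mathlib

/-- Finite q-Pochhammer symbol `(x;q)_n = ∏_{k=0}^{n-1} (1 - x q^k)`. -/
noncomputable def qPoch (x q : ℂ) (n : ℕ) : ℂ := ∏ k ∈ Finset.range n, (1 - x * q ^ k)

/-- Infinite q-Pochhammer symbol `(x;q)_∞ = ∏_{k=0}^{∞} (1 - x q^k)`. -/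
noncomputable def qPochInf (x q : ℂ) : ℂ := ∏' k : ℕ, (1 - x * q ^ k)

/-- Gaussian binomial coefficient `[n k]_q`, equal to `0` for `k > n`. -/
noncomputable def gbinom (q : ℂ) (n k : ℕ) : ℂ :=
  if k ≤ n then qPoch q q n / (qPoch q q k * qPoch q q (n - k)) else 0

/-!
Expanding `(q;q²)_n` by the q-binomial theorem
`(x;r)_n = ∑_k r^(k choose 2) (-x)^k [n k]_r` writes the right-hand side as `1` plus the row sums
of the double series `(-1)^(n+k) q^(2n+1+k²) [n k]_{q²}`. Summed by columns instead, the
q-binomial series `∑_m [m+k k]_r w^m = 1/(w;r)_(k+1)` at `w = -q²` turns column `k` into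
`q^((k+1)²) / (-q²;q²)_(k+1)`, the `(k+1)`-st term of the left-hand side. The double series
converges absolutely because `[n k]_r` is bounded for `|r| < 1`, which follows from
`exp(-|x|/((1-|x|)(1-|r|))) ≤ |(x;r)_n| ≤ exp(|x|/(1-|r|))`.
-/

open Finset Real

lemma exp_neg_div_one_sub_le_one_sub {t s : ℝ} (ht : 0 ≤ t) (hts : t ≤ s) (hs : s < 1) :
    exp (-(t / (1 - s))) ≤ 1 - t := by
  have hlog := one_sub_inv_le_log_of_pos (show 0 < 1 - t by linarith)
  have hdiv : t / (1 - t) ≤ t / (1 - s) := div_le_div_of_nonneg_left ht (by linarith) (by linarith)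
  have hinv : 1 - (1 - t)⁻¹ = -(t / (1 - t)) := by field_simp [show 1 - t ≠ 0 by linarith]; ring
  calc exp (-(t / (1 - s))) ≤ exp (log (1 - t)) := exp_le_exp.2 (by linarith)
    _ = 1 - t := exp_log (by linarith)

section QPochhammer

lemma qPoch_zero (x r : ℂ) : qPoch x r 0 = 1 := prod_range_zero _

lemma qPoch_succ (x r : ℂ) (n : ℕ) : qPoch x r (n + 1) = qPoch x r n * (1 - x * r ^ n) :=
  prod_range_succ _ n

lemma qPoch_succ' (x r : ℂ) (n : ℕ) : qPoch x r (n + 1) = (1 - x) * qPoch (x * r) r n := by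
  simp only [qPoch, prod_range_succ', pow_zero, mul_one, pow_succ', mul_assoc, mul_comm]

variable {x r : ℂ}

lemma norm_qPoch_le (x : ℂ) (hr : ‖r‖ < 1) (n : ℕ) : ‖qPoch x r n‖ ≤ exp (‖x‖ / (1 - ‖r‖)) := by
  calc ‖qPoch x r n‖ ≤ ∏ k ∈ range n, ‖1 - x * r ^ k‖ := norm_prod_le _ _
    _ ≤ ∏ k ∈ range n, exp (‖x‖ * ‖r‖ ^ k) := by
      refine prod_le_prod (fun _ _ => norm_nonneg _) fun k _ => ?_
      calc ‖1 - x * r ^ k‖ ≤ ‖(1 : ℂ)‖ + ‖x * r ^ k‖ := norm_sub_le _ _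
        _ = ‖x‖ * ‖r‖ ^ k + 1 := by rw [norm_one, norm_mul, norm_pow, add_comm]
        _ ≤ exp (‖x‖ * ‖r‖ ^ k) := add_one_le_exp _
    _ = exp (‖x‖ * ∑ k ∈ range n, ‖r‖ ^ k) := by rw [← exp_sum, mul_sum]
    _ ≤ exp (‖x‖ / (1 - ‖r‖)) := by
      rw [exp_le_exp, div_eq_mul_inv, ← one_div, range_eq_Ico, ← pow_zero ‖r‖]
      gcongr
      exact geom_sum_Ico_le_of_lt_one (norm_nonneg r) hr

lemma exp_neg_le_norm_qPoch (hx : ‖x‖ < 1) (hr : ‖r‖ < 1) (n : ℕ) :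
    exp (-(‖x‖ / ((1 - ‖x‖) * (1 - ‖r‖)))) ≤ ‖qPoch x r n‖ := by
  have hx1 : 0 < 1 - ‖x‖ := by linarith
  calc exp (-(‖x‖ / ((1 - ‖x‖) * (1 - ‖r‖))))
      ≤ exp (∑ k ∈ range n, -(‖x‖ * ‖r‖ ^ k / (1 - ‖x‖))) := by
        rw [exp_le_exp, sum_neg_distrib, neg_le_neg_iff, ← sum_div, ← mul_sum, mul_comm (1 - ‖x‖),
          ← div_div, div_le_div_iff_of_pos_right hx1, div_eq_mul_inv, ← one_div, range_eq_Ico,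
          ← pow_zero ‖r‖]
        gcongr
        exact geom_sum_Ico_le_of_lt_one (norm_nonneg r) hr
    _ = ∏ k ∈ range n, exp (-(‖x‖ * ‖r‖ ^ k / (1 - ‖x‖))) := exp_sum _ _
    _ ≤ ∏ k ∈ range n, ‖1 - x * r ^ k‖ := by
      refine prod_le_prod (fun _ _ => (exp_pos _).le) fun k _ => ?_
      have hxr : ‖x‖ * ‖r‖ ^ k ≤ ‖x‖ :=
        mul_le_of_le_one_right (norm_nonneg x) (pow_le_one₀ (norm_nonneg r) hr.le)
      calc exp (-(‖x‖ * ‖r‖ ^ k / (1 - ‖x‖))) ≤ 1 - ‖x‖ * ‖r‖ ^ k :=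
            exp_neg_div_one_sub_le_one_sub (by positivity) hxr hx
        _ = ‖(1 : ℂ)‖ - ‖x * r ^ k‖ := by rw [norm_one, norm_mul, norm_pow]
        _ ≤ ‖1 - x * r ^ k‖ := norm_sub_norm_le _ _
    _ = ‖qPoch x r n‖ := (norm_prod _ _).symm

lemma qPoch_ne_zero (hx : ‖x‖ < 1) (hr : ‖r‖ < 1) (n : ℕ) : qPoch x r n ≠ 0 :=
  norm_pos_iff.1 ((exp_pos _).trans_le (exp_neg_le_norm_qPoch hx hr n))

end QPochhammer

section GaussianBinomial

variable {r : ℂ}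

lemma gbinom_of_lt {n k : ℕ} (h : n < k) : gbinom r n k = 0 := if_neg (Nat.not_le.2 h)

variable (hr : ∀ j, qPoch r r j ≠ 0)
include hr

lemma gbinom_zero_right (n : ℕ) : gbinom r n 0 = 1 := by
  simp [gbinom, qPoch_zero, hr n]

lemma gbinom_self (n : ℕ) : gbinom r n n = 1 := by
  simp [gbinom, qPoch_zero, hr n]

lemma gbinom_succ_succ (n k : ℕ) :
    gbinom r (n + 1) (k + 1) = r ^ (k + 1) * gbinom r n (k + 1) + gbinom r n k := by
  rcases lt_trichotomy k n with hkn | rfl | hnk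
  · obtain ⟨m, rfl⟩ := Nat.exists_eq_add_of_lt hkn
    have e1 : k + m + 1 + 1 - (k + 1) = m + 1 := by omega
    have e2 : k + m + 1 - (k + 1) = m := by omega
    have e3 : k + m + 1 - k = m + 1 := by omega
    have h1 : k + 1 ≤ k + m + 1 + 1 := by omega
    have h2 : k + 1 ≤ k + m + 1 := by omega
    have h3 : k ≤ k + m + 1 := by omega
    simp only [gbinom, e1, e2, e3, h1, h2, h3, if_true, qPoch_succ r r (k + m + 1),
      qPoch_succ r r k, qPoch_succ r r m]
    have fk := right_ne_zero_of_mul (qPoch_succ r r k ▸ hr (k + 1))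
    have fm := right_ne_zero_of_mul (qPoch_succ r r m ▸ hr (m + 1))
    have := hr k
    have := hr m
    -- cleared of denominators: `1 - r^(n+1) = r^(k+1) (1 - r^(n-k)) + (1 - r^(k+1))`
    field_simp
    ring
  · rw [gbinom_self hr, gbinom_self hr, gbinom_of_lt (Nat.lt_succ_self k)]
    ring
  · rw [gbinom_of_lt (by omega), gbinom_of_lt (by omega), gbinom_of_lt hnk]
    ring

lemma qPoch_eq_sum_gbinom (x : ℂ) (n : ℕ) :
    qPoch x r n = ∑ k ∈ range (n + 1), r ^ k.choose 2 * (-x) ^ k * gbinom r n k := by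
  induction n generalizing x with
  | zero => simp [qPoch_zero, gbinom_zero_right hr]
  | succ n ih =>
    set d : ℕ → ℂ := fun k => r ^ k.choose 2 * (-(x * r)) ^ k * gbinom r n k with hd
    have hshift : ∑ k ∈ range (n + 1), d (k + 1) = ∑ k ∈ range (n + 1), d k - 1 := by
      have h0 : d 0 = 1 := by simp [hd, gbinom_zero_right hr]
      have htop : d (n + 1) = 0 := by simp [hd, gbinom_of_lt (Nat.lt_succ_self n)]
      have h := sum_range_succ' d (n + 1)
      rw [sum_range_succ, htop, h0] at h
      linear_combination -h
    have hterm : ∀ k, r ^ (k + 1).choose 2 * (-x) ^ (k + 1) * gbinom r (n + 1) (k + 1)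
        = d (k + 1) + -x * d k := by
      intro k
      have hchoose : (k + 1).choose 2 = k.choose 1 + k.choose 2 := Nat.choose_succ_succ k 1
      simp only [hd, gbinom_succ_succ hr, hchoose, Nat.choose_one_right]
      ring
    have hS : qPoch x r (n + 1) = (1 - x) * ∑ k ∈ range (n + 1), d k := by rw [qPoch_succ', ih]
    rw [hS, sum_range_succ' _ (n + 1)]
    simp only [hterm, sum_add_distrib, ← mul_sum, hshift, gbinom_zero_right hr]
    simp only [Nat.choose_zero_succ, pow_zero, mul_one]
    ring

end GaussianBinomial

section GaussianBinomialSeries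

variable {r : ℂ} (hr : ‖r‖ < 1)
include hr

lemma exists_forall_norm_gbinom_le : ∃ C, ∀ n k, ‖gbinom r n k‖ ≤ C := by
  set ε := exp (-(‖r‖ / ((1 - ‖r‖) * (1 - ‖r‖))))
  refine ⟨exp (‖r‖ / (1 - ‖r‖)) / (ε * ε), fun n k => ?_⟩
  by_cases hkn : k ≤ n
  · rw [gbinom, if_pos hkn, norm_div, norm_mul]
    exact div_le_div₀ (exp_nonneg _) (norm_qPoch_le r hr n) (by positivity)
      (mul_le_mul (exp_neg_le_norm_qPoch hr hr k) (exp_neg_le_norm_qPoch hr hr (n - k))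
        (exp_nonneg _) (norm_nonneg _))
  · rw [gbinom, if_neg hkn, norm_zero]
    positivity

lemma summable_gbinom_mul_pow {w : ℂ} (hw : ‖w‖ < 1) (k : ℕ) :
    Summable fun m => gbinom r (m + k) k * w ^ m := by
  obtain ⟨C, hC⟩ := exists_forall_norm_gbinom_le hr
  refine .of_norm_bounded ((summable_geometric_of_lt_one (norm_nonneg w) hw).mul_left C)
    fun m => ?_
  rw [norm_mul, norm_pow]
  exact mul_le_mul_of_nonneg_right (hC _ _) (by positivity)

theorem hasSum_gbinom_mul_pow {w : ℂ} (hw : ‖w‖ < 1) (k : ℕ) :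
    HasSum (fun m => gbinom r (m + k) k * w ^ m) (qPoch w r (k + 1))⁻¹ := by
  have hr' : ∀ j, qPoch r r j ≠ 0 := qPoch_ne_zero hr hr
  induction k with
  | zero =>
    simpa [gbinom_zero_right hr', qPoch_succ, qPoch_zero] using hasSum_geometric_of_norm_lt_one hw
  | succ k ih =>
    set A := ∑' m, gbinom r (m + (k + 1)) (k + 1) * w ^ m
    have hA : HasSum (fun m => gbinom r (m + (k + 1)) (k + 1) * w ^ m) A :=
      (summable_gbinom_mul_pow hr hw (k + 1)).hasSum
    have hshift : HasSum (fun m => gbinom r (m + k) (k + 1) * w ^ m) (w * A) := by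
      have h : HasSum (fun m => gbinom r (m + 1 + k) (k + 1) * w ^ (m + 1)) (w * A) := by
        have hf : (fun m => gbinom r (m + 1 + k) (k + 1) * w ^ (m + 1))
            = fun m => w * (gbinom r (m + (k + 1)) (k + 1) * w ^ m) := by
          funext m
          rw [add_right_comm, add_assoc, pow_succ]
          ring
        rw [hf]
        exact hA.mul_left w
      simpa [gbinom_of_lt (Nat.lt_succ_self k)] using
        (hasSum_nat_add_iff (f := fun m => gbinom r (m + k) (k + 1) * w ^ m) 1).mp h
    have hpascal : HasSum (fun m => gbinom r (m + (k + 1)) (k + 1) * w ^ m)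
        (r ^ (k + 1) * (w * A) + (qPoch w r (k + 1))⁻¹) := by
      have hf : (fun m => gbinom r (m + (k + 1)) (k + 1) * w ^ m)
          = fun m =>
            r ^ (k + 1) * (gbinom r (m + k) (k + 1) * w ^ m) + gbinom r (m + k) k * w ^ m := by
        funext m
        rw [← add_assoc, gbinom_succ_succ hr']
        ring
      rw [hf]
      exact (hshift.mul_left (r ^ (k + 1))).add ih
    have hfac : 1 - w * r ^ (k + 1) ≠ 0 :=
      right_ne_zero_of_mul (qPoch_succ w r (k + 1) ▸ qPoch_ne_zero hw hr (k + 1 + 1))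
    convert hA using 1
    rw [qPoch_succ w r (k + 1), mul_inv, eq_comm, eq_mul_inv_iff_mul_eq₀ hfac]
    linear_combination hA.unique hpascal

end GaussianBinomialSeries

lemma two_mul_choose_two_add_self (k : ℕ) : 2 * k.choose 2 + k = k ^ 2 := by
  induction k with
  | zero => rfl
  | succ k ih =>
    have hchoose : (k + 1).choose 2 = k.choose 1 + k.choose 2 := Nat.choose_succ_succ k 1
    rw [hchoose, Nat.choose_one_right]
    linarith

noncomputable def mockThetaPhiTerm (q : ℂ) (n k : ℕ) : ℂ :=
  (-1) ^ (n + k) * q ^ (2 * n + 1 + k ^ 2) * gbinom (q ^ 2) n k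

section MockThetaPhi

variable {q : ℂ} (hq : ‖q‖ < 1)
include hq

lemma norm_sq_lt_one : ‖q ^ 2‖ < 1 := by
  rw [norm_pow]
  exact pow_lt_one₀ (norm_nonneg q) hq two_ne_zero

lemma hasSum_mockThetaPhiTerm_row (n : ℕ) :
    HasSum (fun k => mockThetaPhiTerm q n k) ((-1) ^ n * q ^ (2 * n + 1) * qPoch q (q ^ 2) n) := by
  have hr := qPoch_ne_zero (norm_sq_lt_one hq) (norm_sq_lt_one hq)
  have hfin : (-1) ^ n * q ^ (2 * n + 1) * qPoch q (q ^ 2) n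
      = ∑ k ∈ range (n + 1), mockThetaPhiTerm q n k := by
    rw [qPoch_eq_sum_gbinom hr, mul_sum]
    refine sum_congr rfl fun k _ => ?_
    have hk : q ^ (k ^ 2) = (q ^ 2) ^ k.choose 2 * q ^ k := by
      rw [← two_mul_choose_two_add_self, pow_add, pow_mul]
    rw [mockThetaPhiTerm, pow_add q (2 * n + 1) (k ^ 2), hk, neg_pow, pow_add (-1 : ℂ)]
    ring
  rw [hfin]
  exact hasSum_sum_of_ne_finset_zero fun k hk => by
    rw [mockThetaPhiTerm, gbinom_of_lt (by simpa using hk), mul_zero]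

lemma hasSum_mockThetaPhiTerm_col (k : ℕ) :
    HasSum (fun n => mockThetaPhiTerm q n k)
      (q ^ ((k + 1) ^ 2) / qPoch (-q ^ 2) (q ^ 2) (k + 1)) := by
  have hw : ‖-q ^ 2‖ < 1 := by rw [norm_neg]; exact norm_sq_lt_one hq
  have hshift : (fun m => mockThetaPhiTerm q (m + k) k)
      = fun m => q ^ ((k + 1) ^ 2) * (gbinom (q ^ 2) (m + k) k * (-q ^ 2) ^ m) := by
    funext m
    rw [mockThetaPhiTerm, neg_pow, show m + k + k = m + 2 * k by ring, pow_add, pow_mul,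
      neg_one_sq, one_pow, show 2 * (m + k) + 1 + k ^ 2 = (k + 1) ^ 2 + 2 * m by ring, pow_add,
      pow_mul]
    ring
  have h := (hasSum_gbinom_mul_pow (norm_sq_lt_one hq) hw k).mul_left (q ^ ((k + 1) ^ 2))
  rw [← hshift, ← div_eq_mul_inv, hasSum_nat_add_iff (f := fun n => mockThetaPhiTerm q n k)] at h
  rwa [sum_eq_zero fun i hi => by rw [mockThetaPhiTerm, gbinom_of_lt (mem_range.1 hi), mul_zero],
    add_zero] at h

lemma summable_mockThetaPhiTerm : Summable (Function.uncurry (mockThetaPhiTerm q)) := by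
  obtain ⟨C, hC⟩ := exists_forall_norm_gbinom_le (norm_sq_lt_one hq)
  have hC0 : 0 ≤ C := (norm_nonneg _).trans (hC 0 0)
  have hgeom := summable_geometric_of_lt_one (norm_nonneg q) hq
  refine .of_norm_bounded ((hgeom.mul_left C).mul_of_nonneg hgeom (fun n => by positivity)
    (fun k => by positivity)) fun ⟨n, k⟩ => ?_
  have hexp : n + k ≤ 2 * n + 1 + k ^ 2 := by nlinarith [Nat.le_self_pow two_ne_zero k]
  calc ‖mockThetaPhiTerm q n k‖ = ‖q‖ ^ (2 * n + 1 + k ^ 2) * ‖gbinom (q ^ 2) n k‖ := by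
        rw [mockThetaPhiTerm, norm_mul, norm_mul, norm_pow, norm_pow, norm_neg, norm_one, one_pow,
          one_mul]
    _ ≤ ‖q‖ ^ (n + k) * C :=
        mul_le_mul (pow_le_pow_of_le_one (norm_nonneg q) hq.le hexp) (hC n k) (norm_nonneg _)
          (by positivity)
    _ = C * ‖q‖ ^ n * ‖q‖ ^ k := by ring

end MockThetaPhi

theorem stmt9 (q : ℂ) (hq : ‖q‖ < 1) :
    ∑' n : ℕ, q ^ (n ^ 2) / qPoch (-q ^ 2) (q ^ 2) n
      = 1 + ∑' n : ℕ, (-1 : ℂ) ^ n * q ^ (2 * n + 1) * qPoch q (q ^ 2) n := by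
  have hsum := (summable_mockThetaPhiTerm hq).hasSum
  have hrows := hsum.prod_fiberwise (hasSum_mockThetaPhiTerm_row hq)
  have hcols := ((Equiv.prodComm ℕ ℕ).hasSum_iff.2 hsum).prod_fiberwise
    (hasSum_mockThetaPhiTerm_col hq)
  have hlhs :=
    (hasSum_nat_add_iff (f := fun n => q ^ (n ^ 2) / qPoch (-q ^ 2) (q ^ 2) n) 1).mp hcols
  rw [hlhs.tsum_eq, hrows.tsum_eq, sum_range_one, qPoch_zero]
  ring
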